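/- Let p and q be relatively prime positive integers and let E_{ij} be a p×q 0-1 matrix with exactly one nonzero entry. Then the (p+q)×(p+q) block matrix B = [[C_p, E_{ij}],[0, C_q]] has stable index exactly pq: the powers B, B², …, B^{pq} are all 0-1 matrices, and B^{pq+1} has an entry greater than 1. -/

import Mathlib

/-- A matrix over ℕ is a 0-1 matrix iff all its entries are at most 1. -/
def IsZO {α β : Type*} (A : Matrix α β ℕ) : Prop := ∀ i j, A i j ≤ 1

/-- The stable index of a 0-1 matrix: the smallest positive `k` with `A ^ (k+1)`
not a 0-1 matrix, or `⊤` if no such `k` exists. -/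
noncomputable def theta {α : Type*} [Fintype α] [DecidableEq α]
    (A : Matrix α α ℕ) : ℕ∞ :=
  sInf ((fun k : ℕ => (k : ℕ∞)) '' {k : ℕ | 1 ≤ k ∧ ¬ IsZO (A ^ (k + 1))})

/-- `g(n)` from the paper. -/
def g (n : ℕ) : ℕ :=
  if n % 2 = 1 then (n ^ 2 - 1) / 4
  else if n % 4 = 0 then (n ^ 2 - 4) / 4
  else (n ^ 2 - 16) / 4

/-- Basic circulant 0-1 matrix of order `n`. -/
def Cmat (n : ℕ) : Matrix (Fin n) (Fin n) ℕ :=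
  Matrix.of fun i j => if (j : ℕ) = ((i : ℕ) + 1) % n then 1 else 0

/-- Condition (★) on `(n, p, q)`. -/
def StarCond (n p q : ℕ) : Prop :=
  p + q = n ∧
  ((n % 2 = 1 ∧ ({p, q} : Finset ℕ) = {(n + 1) / 2, (n - 1) / 2}) ∨
   (n % 4 = 0 ∧ ({p, q} : Finset ℕ) = {(n + 2) / 2, (n - 2) / 2}) ∨
   (n % 4 = 2 ∧ ({p, q} : Finset ℕ) = {(n + 4) / 2, (n - 4) / 2}))

/-!
Write `E = E_{ij}`. The upper right block of `B ^ m` is `∑_{k<m} C_p ^ k E_{ij} C_q ^ (m-1-k)`,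
whose `(x, y)` entry counts the `k < m` with `k ≡ i - x (mod p)` and `k ≡ j - y + m - 1 (mod q)`.
By the Chinese remainder theorem at most one `k < pq` satisfies both, so `B ^ m` is a 0-1 matrix
for `m ≤ pq`; for `m = pq + 1` and `(x, y) = (i, j)` both `k = 0` and `k = pq` do.
-/

open Finset Fin.CommRing

section IsZO

variable {α β γ δ : Type*}

lemma IsZO.fromBlocks {A : Matrix γ α ℕ} {B : Matrix γ β ℕ} {C : Matrix δ α ℕ}
    {D : Matrix δ β ℕ} (hA : IsZO A) (hB : IsZO B) (hC : IsZO C) (hD : IsZO D) :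
    IsZO (Matrix.fromBlocks A B C D) := by
  rintro (i | i) (j | j)
  exacts [hA i j, hB i j, hC i j, hD i j]

lemma isZO_zero : IsZO (0 : Matrix α β ℕ) := fun _ _ => zero_le_one

lemma exists_eq_single_of_isZO [DecidableEq α] [DecidableEq β] {E : Matrix α β ℕ}
    (hE : IsZO E) (hone : ∃! ij : α × β, E ij.1 ij.2 ≠ 0) :
    ∃ i j, E = Matrix.single i j 1 := by
  obtain ⟨⟨i, j⟩, hij, huniq⟩ := hone
  refine ⟨i, j, Matrix.ext fun x y => ?_⟩
  rw [Matrix.single_apply]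
  split_ifs with h
  · obtain ⟨rfl, rfl⟩ := h
    exact le_antisymm (hE i j) (Nat.one_le_iff_ne_zero.mpr hij)
  · by_contra hxy
    obtain ⟨rfl, rfl⟩ := Prod.ext_iff.mp (huniq (x, y) hxy)
    exact h ⟨rfl, rfl⟩

end IsZO

lemma theta_eq_of_isZO_pow {α : Type*} [Fintype α] [DecidableEq α] {A : Matrix α α ℕ} {n : ℕ}
    (hn : 1 ≤ n) (hzo : ∀ m, 1 ≤ m → m ≤ n → IsZO (A ^ m)) (hnot : ¬ IsZO (A ^ (n + 1))) :
    theta A = n := by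
  refine le_antisymm (sInf_le ⟨n, ⟨hn, hnot⟩, rfl⟩) (le_sInf ?_)
  rintro _ ⟨k, ⟨hk, hkzo⟩, rfl⟩
  by_contra! hlt
  exact hkzo (hzo (k + 1) (by omega) (by exact_mod_cast hlt))

lemma Matrix.fromBlocks_zero₂₁_pow {R m n : Type*} [Fintype m] [DecidableEq m] [Fintype n]
    [DecidableEq n] [Semiring R] (A : Matrix m m R) (B : Matrix m n R) (D : Matrix n n R)
    (k : ℕ) :
    Matrix.fromBlocks A B 0 D ^ k =
      Matrix.fromBlocks (A ^ k) (∑ l ∈ range k, A ^ l * B * D ^ (k - 1 - l)) 0 (D ^ k) := by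
  induction k with
  | zero => simp [Matrix.fromBlocks_one]
  | succ k ih =>
    rw [pow_succ, ih, Matrix.fromBlocks_multiply, sum_range_succ]
    simp only [Matrix.mul_zero, Matrix.zero_mul, add_zero, zero_add, ← pow_succ, Matrix.sum_mul,
      Nat.add_sub_cancel, Nat.sub_self, pow_zero, Matrix.mul_one, add_comm (A ^ k * B)]
    congr 2
    refine sum_congr rfl fun l hl => ?_
    have : k - 1 - l + 1 = k - l := by have := mem_range.mp hl; omega
    rw [Matrix.mul_assoc, ← pow_succ, this]

section Cmat

variable {n : ℕ} [NeZero n]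

lemma Cmat_apply (i j : Fin n) : Cmat n i j = if j = i + 1 then 1 else 0 := by
  simp only [Cmat, Matrix.of_apply, Fin.ext_iff, Fin.val_add, Fin.val_one', Nat.add_mod_mod]

lemma Cmat_pow_apply (k : ℕ) (i j : Fin n) : (Cmat n ^ k) i j = if j = i + k then 1 else 0 := by
  induction k generalizing j with
  | zero => simp [Matrix.one_apply, eq_comm]
  | succ k ih =>
    rw [pow_succ, Matrix.mul_apply, sum_eq_single (i + k)]
    · simp [ih, Cmat_apply, add_assoc]
    · intro l _ hl
      rw [ih, if_neg hl, zero_mul]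
    · simp

lemma isZO_Cmat_pow (k : ℕ) : IsZO (Cmat n ^ k) := by
  intro i j
  rw [Cmat_pow_apply]
  split_ifs <;> simp

end Cmat

lemma Cmat_pow_mul_mul_Cmat_pow_apply {p q : ℕ} [NeZero p] [NeZero q]
    (E : Matrix (Fin p) (Fin q) ℕ) (a b : ℕ) (x : Fin p) (y : Fin q) :
    (Cmat p ^ a * E * Cmat q ^ b) x y = E (x + a) (y - b) := by
  rw [Matrix.mul_apply, sum_eq_single (y - b), Matrix.mul_apply, sum_eq_single (x + a)]
  · simp [Cmat_pow_apply]
  · intro c _ hc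
    rw [Cmat_pow_apply, if_neg hc, zero_mul]
  · simp
  · intro c _ hc
    rw [Cmat_pow_apply, if_neg (by rintro rfl; simp at hc), mul_zero]
  · simp

lemma card_filter_natCast_eq_le_one {p q : ℕ} [NeZero p] [NeZero q] (hpq : p.Coprime q)
    {m : ℕ} (hm : m ≤ p * q) (a : Fin p) (b : Fin q) :
    #{k ∈ range m | ((k : ℕ) : Fin p) = a ∧ ((k : ℕ) : Fin q) = b} ≤ 1 := by
  refine card_le_one.mpr fun k hk l hl => ?_
  simp only [mem_filter, mem_range] at hk hl
  have hkl : k ≡ l [MOD p * q] := (Nat.modEq_and_modEq_iff_modEq_mul hpq).mp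
    ⟨by simpa [Nat.ModEq, Fin.ext_iff] using hk.2.1.trans hl.2.1.symm,
      by simpa [Nat.ModEq, Fin.ext_iff] using hk.2.2.trans hl.2.2.symm⟩
  exact Nat.ModEq.eq_of_lt_of_lt hkl (by omega) (by omega)

section CirculantBlock

variable {p q : ℕ} [NeZero p] [NeZero q] (i : Fin p) (j : Fin q)

lemma sum_Cmat_pow_mul_single_mul_Cmat_pow_apply (m : ℕ) (x : Fin p) (y : Fin q) :
    (∑ k ∈ range m, Cmat p ^ k * Matrix.single i j 1 * Cmat q ^ (m - 1 - k) :
      Matrix (Fin p) (Fin q) ℕ) x y =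
      #{k ∈ range m | ((k : ℕ) : Fin p) = i - x ∧ ((k : ℕ) : Fin q) = j - y + (m - 1 : ℕ)} := by
  simp only [Matrix.sum_apply, Cmat_pow_mul_mul_Cmat_pow_apply, Matrix.single_apply]
  rw [sum_boole, Nat.cast_id]
  congr 1
  refine filter_congr fun k hk => ?_
  rw [Nat.cast_sub (by have := mem_range.mp hk; omega)]
  grind

lemma isZO_fromBlocks_Cmat_single_pow (hpq : p.Coprime q) {m : ℕ} (hm : m ≤ p * q) :
    IsZO (Matrix.fromBlocks (Cmat p) (Matrix.single i j 1) 0 (Cmat q) ^ m) := by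
  rw [Matrix.fromBlocks_zero₂₁_pow]
  refine (isZO_Cmat_pow m).fromBlocks (fun x y => ?_) isZO_zero (isZO_Cmat_pow m)
  rw [sum_Cmat_pow_mul_single_mul_Cmat_pow_apply]
  exact card_filter_natCast_eq_le_one hpq hm _ _

lemma one_lt_fromBlocks_Cmat_single_pow_apply :
    1 < (Matrix.fromBlocks (Cmat p) (Matrix.single i j 1) 0 (Cmat q) ^ (p * q + 1))
      (.inl i) (.inr j) := by
  rw [Matrix.fromBlocks_zero₂₁_pow, Matrix.fromBlocks_apply₁₂,
    sum_Cmat_pow_mul_single_mul_Cmat_pow_apply, sub_self, sub_self, zero_add,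
    Nat.add_sub_cancel]
  have hpq : p * q ≠ 0 := mul_ne_zero (NeZero.ne p) (NeZero.ne q)
  have hsub : {0, p * q} ⊆ {k ∈ range (p * q + 1) |
      ((k : ℕ) : Fin p) = 0 ∧ ((k : ℕ) : Fin q) = (p * q : ℕ)} := by
    intro k hk
    rcases mem_insert.mp hk with rfl | hk
    · simp
    · simp [mem_singleton.mp hk]
  calc 1 < #{0, p * q} := by rw [card_pair hpq.symm]; norm_num
    _ ≤ _ := card_le_card hsub

end CirculantBlock

theorem stmt_15 (p q : ℕ) (hp : 0 < p) (hq : 0 < q) (hpq : Nat.Coprime p q)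
    (E : Matrix (Fin p) (Fin q) ℕ) (hE : IsZO E)
    (hone : ∃! ij : Fin p × Fin q, E ij.1 ij.2 ≠ 0) :
    theta (Matrix.fromBlocks (Cmat p) E 0 (Cmat q)) = (p * q : ℕ∞) ∧
    (∀ m : ℕ, 1 ≤ m → m ≤ p * q →
      IsZO ((Matrix.fromBlocks (Cmat p) E 0 (Cmat q)) ^ m)) ∧
    (∃ i j, 1 < ((Matrix.fromBlocks (Cmat p) E 0 (Cmat q)) ^ (p * q + 1)) i j) := by
  have : NeZero p := ⟨hp.ne'⟩
  have : NeZero q := ⟨hq.ne'⟩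
  obtain ⟨i, j, rfl⟩ := exists_eq_single_of_isZO hE hone
  have hzo : ∀ m, 1 ≤ m → m ≤ p * q →
      IsZO (Matrix.fromBlocks (Cmat p) (Matrix.single i j 1) 0 (Cmat q) ^ m) :=
    fun m _ hm => isZO_fromBlocks_Cmat_single_pow i j hpq hm
  have hbig := one_lt_fromBlocks_Cmat_single_pow_apply i j
  refine ⟨?_, hzo, _, _, hbig⟩
  exact_mod_cast theta_eq_of_isZO_pow (Nat.mul_pos hp hq) hzo
    fun h => (h _ _).not_gt hbig
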